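/- Let P be a set of n points in the plane and let 0 < ε₁ ≤ ε₂ ≤ ε₃ < 1 satisfy ε₁ ≥ 3/8, ε₂ ≥ 1/2, and ε₁ + ε₃ ≥ 1. Then there exist three points p₁, p₂, p₃ ∈ ℝ² such that every axis-parallel box containing more than ε_i·n points of P contains at least i of the points p₁, p₂, p₃, for each i ∈ {1,2,3}. -/

import Mathlib

/-- `B` is a compact axis-parallel box in `ℝ²`: a product of closed intervals. -/
def IsBox (B : Set (EuclideanSpace ℝ (Fin 2))) : Prop :=
  ∃ a b : Fin 2 → ℝ, B = {x | ∀ i, x i ∈ Set.Icc (a i) (b i)}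

/-- Number of points of the finite set `P` lying in the set `C`. -/
noncomputable def ptsIn (P : Finset (EuclideanSpace ℝ (Fin 2)))
    (C : Set (EuclideanSpace ℝ (Fin 2))) : ℕ :=
  ((P : Set (EuclideanSpace ℝ (Fin 2))) ∩ C).ncard

/-!
Let `c` be the point whose coordinates are medians of `P`. Every box with more than `n / 2`
points contains `c`, and every box missing `c` lies in one of the four open halfplanes
`W, N, E, S` bounded by the median lines. Of the two groupings `{W, N}, {E, S}` and
`{N, E}, {S, W}` one is balanced: each group holds at most `3n / 4` points and each quadrant where
two halfplanes of different groups cross holds at most `n / 4` points.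

The point `p₂` is a common point of the boxes it has to hit on behalf of the first group: the
`ε₃`-heavy boxes, the `ε₁`-heavy boxes inside a halfplane of the group, and the `ε₂`-heavy boxes
meeting all of the latter; `p₃` is chosen likewise for the second group. Counting shows that these
families are pairwise intersecting, so Helly's theorem for boxes provides the points. Finally an
`ε₂`-heavy box meets all `ε₁`-heavy boxes of one of the groups: otherwise two such boxes from
different groups, both disjoint from it, would share more than `n / 4` points of one quadrant.
-/

open Finset

local notation "ℝ²" => EuclideanSpace ℝ (Fin 2)

section PtsIn

variable (P : Finset ℝ²)

open scoped Classical in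
theorem ptsIn_eq_card_filter (C : Set ℝ²) : ptsIn P C = #{x ∈ P | x ∈ C} := by
  rw [ptsIn, ← Set.ncard_coe_finset]
  congr 1
  ext
  simp

theorem ptsIn_univ : ptsIn P Set.univ = #P := by
  simp [ptsIn]

theorem ptsIn_empty : ptsIn P ∅ = 0 := by
  simp [ptsIn]

theorem ptsIn_mono {C D : Set ℝ²} (h : C ⊆ D) : ptsIn P C ≤ ptsIn P D :=
  Set.ncard_le_ncard (Set.inter_subset_inter_right _ h) (P.finite_toSet.inter_of_left D)

theorem ptsIn_union_add_ptsIn_inter (C D : Set ℝ²) :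
    ptsIn P (C ∪ D) + ptsIn P (C ∩ D) = ptsIn P C + ptsIn P D := by
  rw [ptsIn, ptsIn, ptsIn, ptsIn, Set.inter_union_distrib_left, Set.inter_inter_distrib_left]
  exact Set.ncard_union_add_ncard_inter _ _ (P.finite_toSet.inter_of_left C)
    (P.finite_toSet.inter_of_left D)

theorem ptsIn_add_ptsIn_le {C D U Z : Set ℝ²} (hU : C ∪ D ⊆ U) (hZ : C ∩ D ⊆ Z) :
    ptsIn P C + ptsIn P D ≤ ptsIn P U + ptsIn P Z := by
  rw [← ptsIn_union_add_ptsIn_inter]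
  exact add_le_add (ptsIn_mono P hU) (ptsIn_mono P hZ)

theorem ptsIn_add_ptsIn_le_of_disjoint {C D U : Set ℝ²} (hU : C ∪ D ⊆ U) (h : Disjoint C D) :
    ptsIn P C + ptsIn P D ≤ ptsIn P U := by
  rw [← ptsIn_union_add_ptsIn_inter, h.inter_eq, ptsIn_empty, add_zero]
  exact ptsIn_mono P hU

theorem inter_nonempty_of_ptsIn_lt {C D U : Set ℝ²} (hU : C ∪ D ⊆ U)
    (h : ptsIn P U < ptsIn P C + ptsIn P D) : (C ∩ D).Nonempty := by
  by_contra hCD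
  rw [Set.not_nonempty_iff_eq_empty, ← Set.disjoint_iff_inter_eq_empty] at hCD
  exact h.not_ge (ptsIn_add_ptsIn_le_of_disjoint P hU hCD)

end PtsIn

theorem ciSup_mem_iInter_Icc_of_le {α ι : Type*} [ConditionallyCompleteLattice α] [Nonempty ι]
    {f g : ι → α} (h : ∀ i j, f i ≤ g j) : ⨆ i, f i ∈ ⋂ i, Set.Icc (f i) (g i) :=
  Set.mem_iInter.2 fun i =>
    ⟨le_ciSup ⟨g i, Set.forall_mem_range.2 fun j => h j i⟩ i, ciSup_le fun j => h j i⟩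

theorem sInter_nonempty_of_isBox {F : Set (Set ℝ²)} (hF : ∀ B ∈ F, IsBox B)
    (hpair : ∀ B ∈ F, ∀ C ∈ F, (B ∩ C).Nonempty) : (⋂₀ F).Nonempty := by
  rcases F.eq_empty_or_nonempty with rfl | ⟨B₀, hB₀⟩
  · simp
  have : Nonempty F := ⟨⟨B₀, hB₀⟩⟩
  choose a b hab using fun B : F => hF B B.2
  have hle (B C : F) (i : Fin 2) : a B i ≤ b C i := by
    obtain ⟨y, hyB, hyC⟩ := hpair B B.2 C C.2
    rw [hab B] at hyB
    rw [hab C] at hyC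
    exact (hyB i).1.trans (hyC i).2
  refine ⟨WithLp.toLp 2 fun i => ⨆ B : F, a B i, Set.mem_sInter.2 fun B hB => ?_⟩
  rw [show B = (⟨B, hB⟩ : F).1 from rfl, hab]
  intro i
  simpa using Set.mem_iInter.1 (ciSup_mem_iInter_Icc_of_le fun B C => hle B C i) ⟨B, hB⟩

theorem Finset.exists_median {α β : Type*} [LinearOrder β] [Nonempty β] (s : Finset α)
    (f : α → β) : ∃ m, 2 * #{x ∈ s | f x < m} ≤ #s ∧ 2 * #{x ∈ s | m < f x} ≤ #s := by
  rcases s.eq_empty_or_nonempty with rfl | hs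
  · exact ⟨Classical.arbitrary β, by simp⟩
  -- the median is the least value `f x₀` with at least half of the points at or below it
  obtain ⟨x₀, hx₀, hmin⟩ :=
    exists_min_image {x ∈ s | #s ≤ 2 * #{y ∈ s | f y ≤ f x}} f (by
      obtain ⟨x, hx, hmax⟩ := s.exists_max_image f hs
      refine ⟨x, mem_filter.2 ⟨hx, ?_⟩⟩
      rw [filter_true_of_mem hmax]
      omega)
  refine ⟨f x₀, ?_, ?_⟩
  · by_contra! hlt
    obtain ⟨x₁, hx₁, hmax⟩ := exists_max_image {x ∈ s | f x < f x₀} f (card_pos.1 (by omega))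
    obtain ⟨hx₁s, hx₁x₀⟩ := mem_filter.1 hx₁
    have heq : {y ∈ s | f y ≤ f x₁} = {y ∈ s | f y < f x₀} :=
      filter_congr fun y hy => ⟨fun h => h.trans_lt hx₁x₀, fun h => hmax y (mem_filter.2 ⟨hy, h⟩)⟩
    exact (hmin x₁ (mem_filter.2 ⟨hx₁s, by rw [heq]; omega⟩)).not_gt hx₁x₀
  · have hsplit := card_filter_add_card_filter_not (s := s) (fun y => f y ≤ f x₀)
    simp only [not_le] at hsplit
    have := (mem_filter.1 hx₀).2
    omega

def IsMedianPoint (P : Finset ℝ²) (c : ℝ²) : Prop :=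
  ∀ i, 2 * ptsIn P {x | x i < c i} ≤ #P ∧ 2 * ptsIn P {x | c i < x i} ≤ #P

theorem exists_isMedianPoint (P : Finset ℝ²) : ∃ c, IsMedianPoint P c := by
  choose m hm using fun i : Fin 2 => P.exists_median fun x : ℝ² => x i
  exact ⟨WithLp.toLp 2 m, fun i => by simpa [ptsIn_eq_card_filter] using hm i⟩

theorem IsBox.exists_subset_of_notMem {B : Set ℝ²} (hB : IsBox B) {c : ℝ²} (hc : c ∉ B) :
    ∃ i, B ⊆ {x | x i < c i} ∨ B ⊆ {x | c i < x i} := by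
  obtain ⟨a, b, rfl⟩ := hB
  simp only [Set.mem_ofPred_eq, Set.mem_Icc, not_forall, not_and_or, not_le] at hc
  obtain ⟨i, hi | hi⟩ := hc
  · exact ⟨i, .inr fun x hx => hi.trans_le (hx i).1⟩
  · exact ⟨i, .inl fun x hx => (hx i).2.trans_lt hi⟩

def IsHeavy (P : Finset ℝ²) (ε : ℝ) (B : Set ℝ²) : Prop :=
  IsBox B ∧ ε * #P < ptsIn P B

section IsHeavy

variable {P : Finset ℝ²} {ε ε' : ℝ} {B C : Set ℝ²}

theorem IsHeavy.mono (hB : IsHeavy P ε' B) (hε : ε ≤ ε') : IsHeavy P ε B :=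
  ⟨hB.1, (mul_le_mul_of_nonneg_right hε (Nat.cast_nonneg _)).trans_lt hB.2⟩

theorem IsHeavy.inter_nonempty_of_subset {U : Set ℝ²} (hB : IsHeavy P ε B)
    (hC : IsHeavy P ε' C) (hU : B ∪ C ⊆ U) (hUP : ptsIn P U ≤ (ε + ε') * #P) :
    (B ∩ C).Nonempty := by
  refine inter_nonempty_of_ptsIn_lt P hU ?_
  have hlt : (ptsIn P U : ℝ) < ptsIn P B + ptsIn P C := by linarith [hB.2, hC.2]
  exact_mod_cast hlt

theorem IsHeavy.inter_nonempty (hB : IsHeavy P ε B) (hC : IsHeavy P ε' C) (hε : 1 ≤ ε + ε') :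
    (B ∩ C).Nonempty :=
  hB.inter_nonempty_of_subset hC (Set.subset_univ _)
    (by rw [ptsIn_univ]; exact le_mul_of_one_le_left (Nat.cast_nonneg _) hε)

theorem IsMedianPoint.mem_of_isHeavy {c : ℝ²} (hc : IsMedianPoint P c)
    (hB : IsHeavy P (1 / 2) B) : c ∈ B := by
  by_contra hcB
  obtain ⟨i, hi⟩ := hB.1.exists_subset_of_notMem hcB
  have hle : 2 * ptsIn P B ≤ #P := by
    rcases hi with hi | hi
    · exact (Nat.mul_le_mul_left 2 (ptsIn_mono P hi)).trans (hc i).1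
    · exact (Nat.mul_le_mul_left 2 (ptsIn_mono P hi)).trans (hc i).2
  have hle' : (2 * ptsIn P B : ℝ) ≤ #P := by exact_mod_cast hle
  linarith [hB.2]

end IsHeavy

def IsBalancedSplit (P : Finset ℝ²) (𝓡₁ 𝓡₂ : Set (Set ℝ²)) : Prop :=
  4 * ptsIn P (⋃₀ 𝓡₁) ≤ 3 * #P ∧ 4 * ptsIn P (⋃₀ 𝓡₂) ≤ 3 * #P ∧
    ∀ R₁ ∈ 𝓡₁, ∀ R₂ ∈ 𝓡₂, 4 * ptsIn P (R₁ ∩ R₂) ≤ #P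

section IsBalancedSplit

variable {P : Finset ℝ²} {H₁ H₂ H₃ H₄ : Set ℝ²}

theorem IsBalancedSplit.symm {𝓡₁ 𝓡₂ : Set (Set ℝ²)} (h : IsBalancedSplit P 𝓡₁ 𝓡₂) :
    IsBalancedSplit P 𝓡₂ 𝓡₁ :=
  ⟨h.2.1, h.1, fun R₂ h₂ R₁ h₁ => Set.inter_comm R₁ R₂ ▸ h.2.2 R₁ h₁ R₂ h₂⟩

theorem isBalancedSplit_pair (h13 : Disjoint H₁ H₃) (h24 : Disjoint H₂ H₄)
    (h12 : 4 * ptsIn P (H₁ ∪ H₂) ≤ 3 * #P) (h34 : 4 * ptsIn P (H₃ ∪ H₄) ≤ 3 * #P)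
    (h14 : 4 * ptsIn P (H₁ ∩ H₄) ≤ #P) (h23 : 4 * ptsIn P (H₂ ∩ H₃) ≤ #P) :
    IsBalancedSplit P {H₁, H₂} {H₃, H₄} := by
  refine ⟨by rwa [Set.sUnion_pair], by rwa [Set.sUnion_pair], ?_⟩
  simp only [Set.mem_insert_iff, Set.mem_singleton_iff]
  rintro R₁ (rfl | rfl) R₂ (rfl | rfl)
  · simp [h13.inter_eq, ptsIn_empty]
  · exact h14
  · exact h23
  · simp [h24.inter_eq, ptsIn_empty]

theorem isBalancedSplit_rotate_of_lt_ptsIn_union (h13 : Disjoint H₁ H₃) (h24 : Disjoint H₂ H₄)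
    (h₁ : 2 * ptsIn P H₁ ≤ #P) (h₂ : 2 * ptsIn P H₂ ≤ #P)
    (hlt : 3 * #P < 4 * ptsIn P (H₁ ∪ H₂)) : IsBalancedSplit P {H₂, H₃} {H₄, H₁} := by
  have h23 := ptsIn_add_ptsIn_le P (Set.subset_univ ((H₁ ∪ H₂) ∪ (H₂ ∪ H₃)))
    (by rw [Set.union_comm H₁, ← Set.union_inter_distrib_left, h13.inter_eq, Set.union_empty])
  have h41 := ptsIn_add_ptsIn_le P (Set.subset_univ ((H₁ ∪ H₂) ∪ (H₄ ∪ H₁)))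
    (by rw [Set.union_comm H₄, ← Set.union_inter_distrib_left, h24.inter_eq, Set.union_empty])
  have h34 := ptsIn_add_ptsIn_le_of_disjoint P (Set.subset_univ ((H₁ ∪ H₂) ∪ (H₃ ∩ H₄)))
    (.union_left (h13.mono_right Set.inter_subset_left) (h24.mono_right Set.inter_subset_right))
  have h12 := ptsIn_union_add_ptsIn_inter P H₁ H₂
  rw [ptsIn_univ] at h23 h41 h34
  exact isBalancedSplit_pair h24 h13.symm (by omega) (by omega) (by rw [Set.inter_comm]; omega)
    (by omega)

theorem isBalancedSplit_rotate_of_lt_ptsIn_inter (h13 : Disjoint H₁ H₃) (h24 : Disjoint H₂ H₄)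
    (h₂ : 2 * ptsIn P H₂ ≤ #P) (h₃ : 2 * ptsIn P H₃ ≤ #P)
    (hlt : #P < 4 * ptsIn P (H₂ ∩ H₃)) : IsBalancedSplit P {H₂, H₃} {H₄, H₁} := by
  have h41 := ptsIn_add_ptsIn_le_of_disjoint P (Set.subset_univ ((H₄ ∪ H₁) ∪ (H₂ ∩ H₃)))
    (.union_left (h24.symm.mono_right Set.inter_subset_left)
      (h13.mono_right Set.inter_subset_right))
  have h34 := ptsIn_add_ptsIn_le_of_disjoint P (C := H₃ ∩ H₄) (D := H₂ ∩ H₃)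
    (Set.union_subset Set.inter_subset_left Set.inter_subset_right)
    (h24.symm.mono Set.inter_subset_right Set.inter_subset_left)
  have h12 := ptsIn_add_ptsIn_le_of_disjoint P (C := H₁ ∩ H₂) (D := H₂ ∩ H₃)
    (Set.union_subset Set.inter_subset_right Set.inter_subset_left)
    (h13.mono Set.inter_subset_left Set.inter_subset_right)
  have h23 := ptsIn_union_add_ptsIn_inter P H₂ H₃
  rw [ptsIn_univ] at h41
  exact isBalancedSplit_pair h24 h13.symm (by omega) (by omega) (by rw [Set.inter_comm]; omega)
    (by omega)

theorem isBalancedSplit_or_isBalancedSplit_rotate (h13 : Disjoint H₁ H₃) (h24 : Disjoint H₂ H₄)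
    (h₁ : 2 * ptsIn P H₁ ≤ #P) (h₂ : 2 * ptsIn P H₂ ≤ #P) (h₃ : 2 * ptsIn P H₃ ≤ #P)
    (h₄ : 2 * ptsIn P H₄ ≤ #P) :
    IsBalancedSplit P {H₁, H₂} {H₃, H₄} ∨ IsBalancedSplit P {H₂, H₃} {H₄, H₁} := by
  by_cases h : 4 * ptsIn P (H₁ ∪ H₂) ≤ 3 * #P ∧ 4 * ptsIn P (H₃ ∪ H₄) ≤ 3 * #P ∧
      4 * ptsIn P (H₁ ∩ H₄) ≤ #P ∧ 4 * ptsIn P (H₂ ∩ H₃) ≤ #P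
  · exact .inl (isBalancedSplit_pair h13 h24 h.1 h.2.1 h.2.2.1 h.2.2.2)
  simp only [not_and_or, not_le] at h
  -- relabelling `H₃ H₄ H₁ H₂` preserves both groupings, so two lemmas cover the four cases
  rcases h with h | h | h | h
  · exact .inr (isBalancedSplit_rotate_of_lt_ptsIn_union h13 h24 h₁ h₂ h)
  · exact .inr (isBalancedSplit_rotate_of_lt_ptsIn_union h13.symm h24.symm h₃ h₄ h).symm
  · rw [Set.inter_comm] at h
    exact .inr (isBalancedSplit_rotate_of_lt_ptsIn_inter h13.symm h24.symm h₄ h₁ h).symm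
  · exact .inr (isBalancedSplit_rotate_of_lt_ptsIn_inter h13 h24 h₂ h₃ h)

theorem IsMedianPoint.exists_isBalancedSplit {c : ℝ²} (hc : IsMedianPoint P c) :
    ∃ 𝓡₁ 𝓡₂, IsBalancedSplit P 𝓡₁ 𝓡₂ ∧ ∀ B, IsBox B → c ∉ B → ∃ R ∈ 𝓡₁ ∪ 𝓡₂, B ⊆ R := by
  have hWE : Disjoint {x : ℝ² | x 0 < c 0} {x | c 0 < x 0} :=
    Set.disjoint_left.2 fun _ h h' => lt_asymm (α := ℝ) h h'
  have hNS : Disjoint {x : ℝ² | c 1 < x 1} {x | x 1 < c 1} :=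
    Set.disjoint_left.2 fun _ h h' => lt_asymm (α := ℝ) h h'
  have hcover (B : Set ℝ²) (hB : IsBox B) (hcB : c ∉ B) :
      B ⊆ {x | x 0 < c 0} ∨ B ⊆ {x | c 1 < x 1} ∨ B ⊆ {x | c 0 < x 0} ∨
        B ⊆ {x | x 1 < c 1} := by
    obtain hi | hi := Fin.exists_fin_two.1 (hB.exists_subset_of_notMem hcB) <;> tauto
  rcases isBalancedSplit_or_isBalancedSplit_rotate hWE hNS (hc 0).1 (hc 1).2 (hc 0).2 (hc 1).1
    with h | h <;>
    refine ⟨_, _, h, fun B hB hcB => ?_⟩ <;>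
    rcases hcover B hB hcB with h' | h' | h' | h' <;> exact ⟨_, by simp, h'⟩

end IsBalancedSplit

/-- The boxes that the net point in charge of the halfplanes `𝓡` must hit. -/
def netFamily (P : Finset ℝ²) (ε₁ ε₂ ε₃ : ℝ) (𝓡 : Set (Set ℝ²)) : Set (Set ℝ²) :=
  {B | IsHeavy P ε₃ B ∨ (IsHeavy P ε₁ B ∧ ∃ R ∈ 𝓡, B ⊆ R) ∨
    (IsHeavy P ε₂ B ∧ ∀ C, IsHeavy P ε₁ C → (∃ R ∈ 𝓡, C ⊆ R) → (B ∩ C).Nonempty)}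

section netFamily

variable {P : Finset ℝ²} {ε₁ ε₂ ε₃ : ℝ} {𝓡 𝓡₁ 𝓡₂ : Set (Set ℝ²)} {B : Set ℝ²}

theorem isHeavy_of_mem_netFamily (h₁₂ : ε₁ ≤ ε₂) (h₂₃ : ε₂ ≤ ε₃)
    (hB : B ∈ netFamily P ε₁ ε₂ ε₃ 𝓡) : IsHeavy P ε₁ B := by
  rcases hB with hB | ⟨hB, -⟩ | ⟨hB, -⟩
  · exact hB.mono (h₁₂.trans h₂₃)
  · exact hB
  · exact hB.mono h₁₂

theorem netFamily_pairwise_inter_nonempty (h₁₂ : ε₁ ≤ ε₂) (h₂₃ : ε₂ ≤ ε₃) (h₁ : 3 / 8 ≤ ε₁)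
    (h₂ : 1 / 2 ≤ ε₂) (h₁₃ : 1 ≤ ε₁ + ε₃) (h𝓡 : 4 * ptsIn P (⋃₀ 𝓡) ≤ 3 * #P) :
    ∀ B ∈ netFamily P ε₁ ε₂ ε₃ 𝓡, ∀ C ∈ netFamily P ε₁ ε₂ ε₃ 𝓡, (B ∩ C).Nonempty := by
  have hsub {D : Set ℝ²} : (∃ R ∈ 𝓡, D ⊆ R) → D ⊆ ⋃₀ 𝓡 :=
    fun ⟨_, hR, hD⟩ => hD.trans (Set.subset_sUnion_of_mem hR)
  have h𝓡' : (ptsIn P (⋃₀ 𝓡) : ℝ) ≤ (ε₁ + ε₁) * #P := by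
    have : (4 * ptsIn P (⋃₀ 𝓡) : ℝ) ≤ 3 * #P := by exact_mod_cast h𝓡
    nlinarith [(Nat.cast_nonneg #P : (0 : ℝ) ≤ #P)]
  intro B hB C hC
  have hB₁ := isHeavy_of_mem_netFamily h₁₂ h₂₃ hB
  have hC₁ := isHeavy_of_mem_netFamily h₁₂ h₂₃ hC
  rcases hB with hB | ⟨-, hBR⟩ | ⟨hB, hBmeet⟩
  · exact hB.inter_nonempty hC₁ (by linarith)
  · rcases hC with hC | ⟨-, hCR⟩ | ⟨-, hCmeet⟩
    · exact hB₁.inter_nonempty hC (by linarith)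
    · exact hB₁.inter_nonempty_of_subset hC₁ (Set.union_subset (hsub hBR) (hsub hCR)) h𝓡'
    · exact Set.inter_comm B C ▸ hCmeet B hB₁ hBR
  · rcases hC with hC | ⟨-, hCR⟩ | ⟨hC, -⟩
    · exact hB₁.inter_nonempty hC (by linarith)
    · exact hBmeet C hC₁ hCR
    · exact hB.inter_nonempty hC (by linarith)

theorem IsHeavy.meets_or_meets (h₁ : 3 / 8 ≤ ε₁) (h₂ : 1 / 2 ≤ ε₂)
    (hcross : ∀ R₁ ∈ 𝓡₁, ∀ R₂ ∈ 𝓡₂, 4 * ptsIn P (R₁ ∩ R₂) ≤ #P) (hB : IsHeavy P ε₂ B) :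
    (∀ C, IsHeavy P ε₁ C → (∃ R ∈ 𝓡₁, C ⊆ R) → (B ∩ C).Nonempty) ∨
      (∀ C, IsHeavy P ε₁ C → (∃ R ∈ 𝓡₂, C ⊆ R) → (B ∩ C).Nonempty) := by
  by_contra! h
  obtain ⟨⟨C₁, hC₁, ⟨R₁, hR₁, hCR₁⟩, hBC₁⟩, ⟨C₂, hC₂, ⟨R₂, hR₂, hCR₂⟩, hBC₂⟩⟩ := h
  rw [← Set.disjoint_iff_inter_eq_empty] at hBC₁ hBC₂
  have hcount : ptsIn P C₁ + ptsIn P C₂ + ptsIn P B ≤ #P + ptsIn P (R₁ ∩ R₂) := by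
    have h₁₂ := ptsIn_union_add_ptsIn_inter P C₁ C₂
    have hB := ptsIn_add_ptsIn_le_of_disjoint P (Set.subset_univ ((C₁ ∪ C₂) ∪ B))
      (hBC₁.symm.union_left hBC₂.symm)
    have hR := ptsIn_mono P (Set.inter_subset_inter hCR₁ hCR₂)
    rw [ptsIn_univ] at hB
    omega
  have hcount' : (ptsIn P C₁ + ptsIn P C₂ + ptsIn P B : ℝ) ≤ #P + ptsIn P (R₁ ∩ R₂) := by
    exact_mod_cast hcount
  have hR : (4 * ptsIn P (R₁ ∩ R₂) : ℝ) ≤ #P := by exact_mod_cast hcross R₁ hR₁ R₂ hR₂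
  nlinarith [hC₁.2, hC₂.2, hB.2, (Nat.cast_nonneg #P : (0 : ℝ) ≤ #P)]

theorem exists_net_of_isBalancedSplit {c : ℝ²} (hc : ∀ B, IsHeavy P (1 / 2) B → c ∈ B)
    (hcover : ∀ B, IsBox B → c ∉ B → ∃ R ∈ 𝓡₁ ∪ 𝓡₂, B ⊆ R) (hsplit : IsBalancedSplit P 𝓡₁ 𝓡₂)
    (h₁₂ : ε₁ ≤ ε₂) (h₂₃ : ε₂ ≤ ε₃) (h₁ : 3 / 8 ≤ ε₁) (h₂ : 1 / 2 ≤ ε₂) (h₁₃ : 1 ≤ ε₁ + ε₃) :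
    ∃ p₂ p₃ : ℝ²,
      (∀ B, IsHeavy P ε₁ B → c ∈ B ∨ p₂ ∈ B ∨ p₃ ∈ B) ∧
      (∀ B, IsHeavy P ε₂ B → (c ∈ B ∧ p₂ ∈ B) ∨ (c ∈ B ∧ p₃ ∈ B) ∨ (p₂ ∈ B ∧ p₃ ∈ B)) ∧
      (∀ B, IsHeavy P ε₃ B → c ∈ B ∧ p₂ ∈ B ∧ p₃ ∈ B) := by
  obtain ⟨p₂, hp₂⟩ := sInter_nonempty_of_isBox (F := netFamily P ε₁ ε₂ ε₃ 𝓡₁)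
    (fun B hB => (isHeavy_of_mem_netFamily h₁₂ h₂₃ hB).1)
    (netFamily_pairwise_inter_nonempty h₁₂ h₂₃ h₁ h₂ h₁₃ hsplit.1)
  obtain ⟨p₃, hp₃⟩ := sInter_nonempty_of_isBox (F := netFamily P ε₁ ε₂ ε₃ 𝓡₂)
    (fun B hB => (isHeavy_of_mem_netFamily h₁₂ h₂₃ hB).1)
    (netFamily_pairwise_inter_nonempty h₁₂ h₂₃ h₁ h₂ h₁₃ hsplit.2.1)
  rw [Set.mem_sInter] at hp₂ hp₃
  refine ⟨p₂, p₃, fun B hB => ?_, fun B hB => ?_, fun B hB => ?_⟩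
  · by_cases hcB : c ∈ B
    · exact .inl hcB
    obtain ⟨R, hR | hR, hBR⟩ := hcover B hB.1 hcB
    · exact .inr (.inl (hp₂ B (.inr (.inl ⟨hB, R, hR, hBR⟩))))
    · exact .inr (.inr (hp₃ B (.inr (.inl ⟨hB, R, hR, hBR⟩))))
  · have hcB := hc B (hB.mono h₂)
    rcases hB.meets_or_meets h₁ h₂ hsplit.2.2 with hmeet | hmeet
    · exact .inl ⟨hcB, hp₂ B (.inr (.inr ⟨hB, hmeet⟩))⟩
    · exact .inr (.inl ⟨hcB, hp₃ B (.inr (.inr ⟨hB, hmeet⟩))⟩)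
  · exact ⟨hc B (hB.mono (h₂.trans h₂₃)), hp₂ B (.inl hB), hp₃ B (.inl hB)⟩

end netFamily

theorem weighted_net_boxes_three_general (P : Finset (EuclideanSpace ℝ (Fin 2)))
    (n : ℕ) (hn : P.card = n)
    (ε₁ ε₂ ε₃ : ℝ) (hε₁₂ : ε₁ ≤ ε₂) (hε₂₃ : ε₂ ≤ ε₃)
    (h₁ : ε₁ ≥ 3 / 8) (h₂ : ε₂ ≥ 1 / 2) (h₃ : ε₁ + ε₃ ≥ 1) :
    ∃ p₁ p₂ p₃ : EuclideanSpace ℝ (Fin 2),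
      (∀ B : Set (EuclideanSpace ℝ (Fin 2)), IsBox B →
        (ptsIn P B : ℝ) > ε₁ * n → p₁ ∈ B ∨ p₂ ∈ B ∨ p₃ ∈ B) ∧
      (∀ B : Set (EuclideanSpace ℝ (Fin 2)), IsBox B →
        (ptsIn P B : ℝ) > ε₂ * n →
          (p₁ ∈ B ∧ p₂ ∈ B) ∨ (p₁ ∈ B ∧ p₃ ∈ B) ∨ (p₂ ∈ B ∧ p₃ ∈ B)) ∧
      (∀ B : Set (EuclideanSpace ℝ (Fin 2)), IsBox B →
        (ptsIn P B : ℝ) > ε₃ * n → p₁ ∈ B ∧ p₂ ∈ B ∧ p₃ ∈ B) := by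
  subst hn
  obtain ⟨c, hc⟩ := exists_isMedianPoint P
  obtain ⟨𝓡₁, 𝓡₂, hsplit, hcover⟩ := hc.exists_isBalancedSplit
  obtain ⟨p₂, p₃, hnet₁, hnet₂, hnet₃⟩ :=
    exists_net_of_isBalancedSplit (fun B => hc.mem_of_isHeavy) hcover hsplit hε₁₂ hε₂₃ h₁ h₂ h₃
  exact ⟨c, p₂, p₃, fun B hB hBP => hnet₁ B ⟨hB, hBP⟩, fun B hB hBP => hnet₂ B ⟨hB, hBP⟩,
    fun B hB hBP => hnet₃ B ⟨hB, hBP⟩⟩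

/-- weighted ε-nets of size 3 for axis-parallel boxes in the plane:
if `ε₁ ≥ 3/8`, `ε₂ ≥ 1/2` and `ε₁ + ε₃ ≥ 1` then there are three points such that
every box with more than `ε_i·n` points of `P` contains at least `i` of them. -/
theorem weighted_net_boxes_three (P : Finset (EuclideanSpace ℝ (Fin 2)))
    (n : ℕ) (hn : P.card = n)
    (ε₁ ε₂ ε₃ : ℝ) (hε₁ : 0 < ε₁) (hε₁₂ : ε₁ ≤ ε₂) (hε₂₃ : ε₂ ≤ ε₃) (hε₃ : ε₃ < 1)
    (h₁ : ε₁ ≥ 3 / 8) (h₂ : ε₂ ≥ 1 / 2) (h₃ : ε₁ + ε₃ ≥ 1) :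
    ∃ p₁ p₂ p₃ : EuclideanSpace ℝ (Fin 2),
      (∀ B : Set (EuclideanSpace ℝ (Fin 2)), IsBox B →
        (ptsIn P B : ℝ) > ε₁ * n → p₁ ∈ B ∨ p₂ ∈ B ∨ p₃ ∈ B) ∧
      (∀ B : Set (EuclideanSpace ℝ (Fin 2)), IsBox B →
        (ptsIn P B : ℝ) > ε₂ * n →
          (p₁ ∈ B ∧ p₂ ∈ B) ∨ (p₁ ∈ B ∧ p₃ ∈ B) ∨ (p₂ ∈ B ∧ p₃ ∈ B)) ∧
      (∀ B : Set (EuclideanSpace ℝ (Fin 2)), IsBox B →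
        (ptsIn P B : ℝ) > ε₃ * n → p₁ ∈ B ∧ p₂ ∈ B ∧ p₃ ∈ B) :=
  weighted_net_boxes_three_general P n hn ε₁ ε₂ ε₃ hε₁₂ hε₂₃ h₁ h₂ h₃
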